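/- Every element of the group generated by the 2×2 matrices X and P can be written as i^c · X^a · P^b for some a ∈ {0,1} and b, c ∈ {0,1,2,3}. -/
import Mathlib

open Matrix

noncomputable def Xm : Matrix (Fin 2) (Fin 2) ℂ := !![0,1;1,0]
noncomputable def Pm : Matrix (Fin 2) (Fin 2) ℂ := !![1,0;0,Complex.I]

noncomputable def Xu : (Matrix (Fin 2) (Fin 2) ℂ)ˣ :=
  ⟨Xm, Xm, by ext i j; fin_cases i <;> fin_cases j <;>
      simp [Xm, Matrix.mul_apply, Fin.sum_univ_two],
    by ext i j; fin_cases i <;> fin_cases j <;>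
      simp [Xm, Matrix.mul_apply, Fin.sum_univ_two]⟩

noncomputable def Pu : (Matrix (Fin 2) (Fin 2) ℂ)ˣ :=
  ⟨Pm, !![1,0;0,-Complex.I], by ext i j; fin_cases i <;> fin_cases j <;>
      simp [Pm, Matrix.mul_apply, Fin.sum_univ_two],
    by ext i j; fin_cases i <;> fin_cases j <;>
      simp [Pm, Matrix.mul_apply, Fin.sum_univ_two]⟩

lemma hX2 : Xm ^ 2 = 1 := by
  rw [pow_two]; ext i j; fin_cases i <;> fin_cases j <;>
    simp [Xm, Matrix.mul_apply, Fin.sum_univ_two]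

lemma hP4 : Pm ^ 4 = 1 := by
  show Pm ^ (2+2) = 1
  rw [pow_add, pow_two]
  ext i j; fin_cases i <;> fin_cases j <;>
    simp [Pm, Matrix.mul_apply, Fin.sum_univ_two, Complex.I_mul_I]

lemma hI4 : Complex.I ^ 4 = 1 := by
  simp [pow_succ, Complex.I_mul_I]

lemma hPX : Pm * Xm = Complex.I • (Xm * Pm ^ 3) := by
  rw [show (3:ℕ) = 2+1 from rfl, pow_add, pow_two, pow_one]
  ext i j; fin_cases i <;> fin_cases j <;>
    simp [Pm, Xm, Matrix.mul_apply, Fin.sum_univ_two, Complex.I_mul_I]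

lemma Xmod (a : ℕ) : Xm ^ a = Xm ^ (a % 2) := by
  conv_lhs => rw [← Nat.div_add_mod a 2, pow_add, pow_mul, hX2, one_pow, one_mul]

lemma Pmod (b : ℕ) : Pm ^ b = Pm ^ (b % 4) := by
  conv_lhs => rw [← Nat.div_add_mod b 4, pow_add, pow_mul, hP4, one_pow, one_mul]

lemma Imod (c : ℕ) : Complex.I ^ c = Complex.I ^ (c % 4) := by
  conv_lhs => rw [← Nat.div_add_mod c 4, pow_add, pow_mul, hI4, one_pow, one_mul]

lemma PXcomm (b : ℕ) : Pm ^ b * Xm = Complex.I ^ b • (Xm * Pm ^ (3 * b)) := by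
  induction b with
  | zero => simp
  | succ n ih =>
      rw [pow_succ, mul_assoc, hPX, mul_smul_comm, ← mul_assoc, ih, smul_mul_assoc,
        smul_smul, ← pow_succ', mul_assoc, ← pow_add]
      have h3 : 3 * n + 3 = 3 * (n + 1) := by ring
      rw [h3]

def Qf (m : Matrix (Fin 2) (Fin 2) ℂ) : Prop :=
  ∃ a b c : ℕ, a ≤ 1 ∧ m = Complex.I ^ c • (Xm ^ a * Pm ^ b)

lemma Qf_mul {m n : Matrix (Fin 2) (Fin 2) ℂ} (hm : Qf m) (hn : Qf n) : Qf (m * n) := by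
  obtain ⟨a, b, c, ha, rfl⟩ := hm
  obtain ⟨a', b', c', ha', rfl⟩ := hn
  interval_cases a'
  · refine ⟨a, b + b', c + c', ha, ?_⟩
    rw [smul_mul_smul_comm, ← pow_add, pow_zero, one_mul, mul_assoc, ← pow_add]
  · refine ⟨(a + 1) % 2, 3 * b + b', c + c' + b, by omega, ?_⟩
    rw [← Xmod, smul_mul_smul_comm, pow_one]
    have key : (Xm^a * Pm^b) * (Xm * Pm^b')
        = Complex.I^b • (Xm^(a+1) * Pm^(3*b + b')) := by
      calc (Xm^a * Pm^b) * (Xm * Pm^b') = Xm^a * ((Pm^b * Xm) * Pm^b') := by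
            simp only [mul_assoc]
        _ = Xm^a * ((Complex.I^b • (Xm * Pm^(3*b))) * Pm^b') := by rw [PXcomm]
        _ = Complex.I^b • (Xm^(a+1) * Pm^(3*b + b')) := by
            rw [smul_mul_assoc, mul_smul_comm, pow_succ, pow_add]
            simp only [mul_assoc]
    rw [key, smul_smul, ← pow_add, ← pow_add]

lemma Qf_inv {M : (Matrix (Fin 2) (Fin 2) ℂ)ˣ} (hm : Qf (M : Matrix (Fin 2) (Fin 2) ℂ)) :
    Qf ((M⁻¹ : (Matrix (Fin 2) (Fin 2) ℂ)ˣ) : Matrix (Fin 2) (Fin 2) ℂ) := by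
  obtain ⟨a, b, c, ha, hMeq⟩ := hm
  set N : Matrix (Fin 2) (Fin 2) ℂ := Complex.I^(3*c) • (Pm^(3*b) * Xm^a) with hN
  have hNM : N * (M : Matrix (Fin 2) (Fin 2) ℂ) = 1 := by
    rw [hN, hMeq, smul_mul_smul_comm, ← pow_add]
    have h1 : Complex.I^(3*c + c) = 1 := by
      rw [show 3*c + c = 4*c by ring, pow_mul, hI4, one_pow]
    have h2 : (Pm^(3*b) * Xm^a) * (Xm^a * Pm^b) = 1 := by
      calc (Pm^(3*b) * Xm^a) * (Xm^a * Pm^b) = Pm^(3*b) * (Xm^a * Xm^a) * Pm^b := by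
            simp only [mul_assoc]
        _ = Pm^(3*b) * (Xm^2)^a * Pm^b := by
            rw [← pow_add, ← pow_mul]; congr 2; ring
        _ = Pm^(4*b) := by
            rw [hX2, one_pow, mul_one, ← pow_add]; congr 1; ring
        _ = 1 := by rw [pow_mul, hP4, one_pow]
    rw [h1, h2, one_smul]
  have hinv : ((M⁻¹ : (Matrix (Fin 2) (Fin 2) ℂ)ˣ) : Matrix (Fin 2) (Fin 2) ℂ) = N := by
    symm
    calc N = N * ((M : Matrix (Fin 2) (Fin 2) ℂ) *
          ((M⁻¹ : (Matrix (Fin 2) (Fin 2) ℂ)ˣ) : Matrix (Fin 2) (Fin 2) ℂ)) := by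
            rw [Units.mul_inv, mul_one]
      _ = (N * (M : Matrix (Fin 2) (Fin 2) ℂ)) *
          ((M⁻¹ : (Matrix (Fin 2) (Fin 2) ℂ)ˣ) : Matrix (Fin 2) (Fin 2) ℂ) := by rw [mul_assoc]
      _ = _ := by rw [hNM, one_mul]
  rw [hinv, hN]
  interval_cases a
  · exact ⟨0, 3*b, 3*c, by omega, by simp⟩
  · refine ⟨1, 3*(3*b), 3*c + 3*b, by omega, ?_⟩
    rw [pow_one, PXcomm, smul_smul, ← pow_add]

theorem PX_group_canonical_form
    (M : (Matrix (Fin 2) (Fin 2) ℂ)ˣ)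
    (hM : M ∈ Subgroup.closure ({Xu, Pu} : Set (Matrix (Fin 2) (Fin 2) ℂ)ˣ)) :
    ∃ a b c : ℕ, a ≤ 1 ∧ b ≤ 3 ∧ c ≤ 3 ∧
      (M : Matrix (Fin 2) (Fin 2) ℂ) = Complex.I ^ c • (Xm ^ a * Pm ^ b) := by
  have hQ : Qf (M : Matrix (Fin 2) (Fin 2) ℂ) := by
    induction hM using Subgroup.closure_induction with
    | mem x hx =>
        simp only [Set.mem_insert_iff, Set.mem_singleton_iff] at hx
        rcases hx with rfl | rfl
        · exact ⟨1, 0, 0, by omega, by simp [Xu]⟩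
        · exact ⟨0, 1, 0, by omega, by simp [Pu]⟩
    | one => exact ⟨0, 0, 0, by omega, by simp⟩
    | mul x y hx hy hqx hqy => exact Qf_mul hqx hqy
    | inv x hx hqx => exact Qf_inv hqx
  obtain ⟨a, b, c, ha, heq⟩ := hQ
  refine ⟨a, b % 4, c % 4, ha, by omega, by omega, ?_⟩
  rw [heq, Imod c, Pmod b]
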